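/- arXiv:2405.14299 — 2 statements merged into one kernel-verified Lean document; each statement's English description precedes it below -/
import Mathlib

section
/- Every non-empty connected graph G has a connected dominating set D and an independent set I ⊆ D with |D| = 2|I| − 1. -/
/-!
Grow a pair `I ⊆ D`, starting from `D = I = {v}`, keeping `D` connected, `I` independent and
`|D| = 2|I| - 1`. While `D` does not dominate, connectivity of `G` yields a vertex `y` at distance
exactly two from `D`, joined to `D` through some `z`; adding `y, z` to `D` and `y` to `I` preserves
all three properties. A pair with `D` of maximal size therefore has `D` dominating.
-/

namespace SimpleGraph

variable {V : Type*} (G : SimpleGraph V)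

def IsDominating (D : Set V) : Prop :=
  ∀ v, v ∉ D → ∃ u ∈ D, G.Adj v u

structure IsConnectedWithHalfIndep (D I : Finset V) : Prop where
  subset : I ⊆ D
  connected : (G.induce (D : Set V)).Connected
  isIndepSet : G.IsIndepSet I
  card_add_one : D.card + 1 = 2 * I.card

variable {G}

lemma connected_induce_singleton (v : V) : (G.induce {v}).Connected :=
  connected_iff _ |>.mpr ⟨.of_subsingleton, ⟨⟨v, rfl⟩⟩⟩

lemma Connected.induce_insert {s : Set V} (hs : (G.induce s).Connected) {u x : V} (hu : u ∈ s)
    (hux : G.Adj u x) : (G.induce (insert x s)).Connected := by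
  rw [← Set.union_singleton]
  exact connected_induce_union hs.preconnected (connected_induce_singleton x).preconnected
    hu rfl hux

lemma isConnectedWithHalfIndep_singleton (v : V) : G.IsConnectedWithHalfIndep {v} {v} where
  subset := subset_rfl
  connected := by rw [Finset.coe_singleton]; exact connected_induce_singleton v
  isIndepSet := by simp
  card_add_one := rfl

lemma Connected.exists_adj_adj_of_not_isDominating (hG : G.Connected) {D : Set V}
    (hD : D.Nonempty) (hdom : ¬ G.IsDominating D) :
    ∃ y z, y ∉ D ∧ (∀ u ∈ D, ¬ G.Adj y u) ∧ G.Adj y z ∧ ∃ u ∈ D, G.Adj z u := by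
  obtain ⟨d, hd⟩ := hD
  simp only [IsDominating, not_forall, not_exists, not_and] at hdom
  obtain ⟨v, hvD, hv⟩ := hdom
  let far : Set V := {x | x ∉ D ∧ ∀ u ∈ D, ¬ G.Adj x u}
  obtain ⟨⟨⟨y, z⟩, hyz⟩, -, ⟨hyD, hy⟩, hz⟩ :=
    (hG v d).some.exists_boundary_dart far ⟨hvD, hv⟩ (fun h ↦ h.1 hd)
  have hzD : z ∉ D := fun h ↦ hy z h hyz
  obtain ⟨u, hu, hzu⟩ : ∃ u ∈ D, G.Adj z u := by
    by_contra! hz'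
    exact hz ⟨hzD, hz'⟩
  exact ⟨y, z, hyD, hy, hyz, u, hu, hzu⟩

lemma IsConnectedWithHalfIndep.insert_insert [DecidableEq V] {D I : Finset V}
    (h : G.IsConnectedWithHalfIndep D I) {y z u : V} (hyD : y ∉ D)
    (hy : ∀ u ∈ D, ¬ G.Adj y u) (hyz : G.Adj y z) (hu : u ∈ D) (hzu : G.Adj z u) :
    G.IsConnectedWithHalfIndep (insert y (insert z D)) (insert y I) where
  subset := Finset.insert_subset_insert y (h.subset.trans (Finset.subset_insert z D))
  connected := by
    rw [Finset.coe_insert, Finset.coe_insert]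
    exact (h.connected.induce_insert hu hzu.symm).induce_insert (by simp) hyz.symm
  isIndepSet := by
    rw [Finset.coe_insert]
    exact h.isIndepSet.insert fun w hw _ ↦
      ⟨hy w (h.subset hw), fun hwy ↦ hy w (h.subset hw) hwy.symm⟩
  card_add_one := by
    have hzD : z ∉ D := fun hz ↦ hy z hz hyz
    have hyzD : y ∉ insert z D := by simpa [hyz.ne] using hyD
    rw [Finset.card_insert_of_notMem hyzD, Finset.card_insert_of_notMem hzD,
      Finset.card_insert_of_notMem fun hyI ↦ hyD (h.subset hyI)]
    have := h.card_add_one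
    omega

lemma IsConnectedWithHalfIndep.isDominating_of_maximal_card [Fintype V] {D I : Finset V}
    (hG : G.Connected) (h : G.IsConnectedWithHalfIndep D I)
    (hmax : ∀ D' I', G.IsConnectedWithHalfIndep D' I' → D'.card ≤ D.card) :
    G.IsDominating D := by
  classical
  by_contra hdom
  obtain ⟨y, z, hyD, hy, hyz, u, hu, hzu⟩ :=
    hG.exists_adj_adj_of_not_isDominating (Set.nonempty_coe_sort.mp h.connected.nonempty) hdom
  have hyzD : y ∉ insert z D := by simpa [hyz.ne] using hyD
  have hlt : D.card < (insert y (insert z D)).card :=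
    Finset.card_lt_card ((Finset.subset_insert z D).trans_ssubset (Finset.ssubset_insert hyzD))
  exact (hmax _ _ (h.insert_insert hyD hy hyz hu hzu)).not_gt hlt

end SimpleGraph

/-- Every non-empty connected graph G has a connected dominating set D and an independent set
I ⊆ D with |D| = 2|I| - 1. -/
theorem exists_connected_dominating_set_with_half_independent {V : Type*} [Fintype V]
    (G : SimpleGraph V) (hG : G.Connected) :
    ∃ D I : Finset V, I ⊆ D ∧
      (G.induce (D : Set V)).Connected ∧
      (∀ v, v ∉ D → ∃ u ∈ D, G.Adj v u) ∧
      (∀ u ∈ I, ∀ w ∈ I, u ≠ w → ¬ G.Adj u w) ∧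
      D.card + 1 = 2 * I.card := by
  classical
  obtain ⟨v⟩ := hG.nonempty
  let pairs := Finset.univ.filter fun p : Finset V × Finset V ↦
    G.IsConnectedWithHalfIndep p.1 p.2
  obtain ⟨⟨D, I⟩, hDI, hmax⟩ := pairs.exists_max_image (fun p ↦ p.1.card)
    ⟨({v}, {v}), by simpa [pairs] using SimpleGraph.isConnectedWithHalfIndep_singleton v⟩
  simp only [pairs, Finset.mem_filter, Finset.mem_univ, true_and, Prod.forall] at hDI hmax
  exact ⟨D, I, hDI.subset, hDI.connected, hDI.isDominating_of_maximal_card hG hmax,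
    fun u hu w hw ↦ hDI.isIndepSet hu hw, hDI.card_add_one⟩
end

section
/- Fix c ∈ (0, 1) and a positive integer n with cn > ln(2n). Then every graph with at most n vertices and minimum degree at least cn + 6c^{-1}·t·ln(2n) contains a dominating K_t-model. -/
/-- A *dominating K_t-model* in a graph G is a sequence (T 0, ..., T (t-1)) of pairwise
disjoint non-empty connected subgraphs of G such that for all i < j, every vertex of T j
has a neighbour (in G) in T i. -/
def SimpleGraph.IsDomKtModel {V : Type*} (G : SimpleGraph V) (t : ℕ) (T : Fin t → Set V) : Prop :=
  (∀ i, (T i).Nonempty) ∧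
  (Pairwise fun i j => Disjoint (T i) (T j)) ∧
  (∀ i, (G.induce (T i)).Connected) ∧
  (∀ i j : Fin t, i < j → ∀ v ∈ T j, ∃ u ∈ T i, G.Adj v u)

/-- G contains a dominating K_t-model. -/
def SimpleGraph.HasDomKtModel {V : Type*} (G : SimpleGraph V) (t : ℕ) : Prop :=
  ∃ T : Fin t → Set V, G.IsDomKtModel t T

/-!
Choosing vertices greedily, each new vertex dominates at least a `c`-fraction of the still
undominated vertices (double counting), so a graph on at most `n` vertices with minimum degree
`cn` has a dominating set of size `m = ⌈ln(2n)/c⌉`: fewer than `(1 - c)^m n < 1` vertices stay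
undominated. In a connected graph a dominating set `D` grows into a connected set of size at most
`3|D|`, because the nearest vertex of `D` outside the current connected set is at distance at most
`3` from it. Removing such a connected dominating set `T₁` of one component lowers every degree by
at most `3m`; repeating `t` times yields `T₁, …, Tₜ`, each dominating all later ones, and the
degree budget `3mt ≤ 6c⁻¹t ln(2n)` is exactly what the hypothesis provides.
-/

open Finset

lemma one_sub_pow_mul_lt_one {c x : ℝ} {m : ℕ} (hc : c ≤ 1) (hx : 0 < x)
    (hm : Real.log x < c * m) : (1 - c) ^ m * x < 1 :=
  calc (1 - c) ^ m * x ≤ Real.exp (-c) ^ m * x :=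
        mul_le_mul_of_nonneg_right (pow_le_pow_left₀ (by linarith) (Real.one_sub_le_exp_neg c) m)
          hx.le
    _ < Real.exp (-c) ^ m * Real.exp (c * m) := by
        gcongr
        rwa [← Real.exp_log hx, Real.exp_lt_exp]
    _ = 1 := by rw [← Real.exp_nat_mul, ← Real.exp_add]; ring_nf; exact Real.exp_zero

namespace SimpleGraph

variable {V : Type*} {G : SimpleGraph V}

section Domination

variable [DecidableRel G.Adj]

lemma exists_le_card_filter_adj {c : ℝ} {K W : Finset V} (hWK : W ⊆ K) (hW : W.Nonempty)
    (hdeg : ∀ w ∈ W, c * #K ≤ #{x ∈ K | G.Adj w x}) :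
    ∃ x ∈ K, c * #W ≤ #{w ∈ W | G.Adj x w} := by
  refine exists_le_of_sum_le (hW.mono hWK) ?_
  have hcount : ∑ w ∈ W, #{x ∈ K | G.Adj w x} = ∑ x ∈ K, #{w ∈ W | G.Adj x w} := by
    have := sum_card_bipartiteAbove_eq_sum_card_bipartiteBelow (s := W) (t := K) (r := G.Adj)
    simp only [bipartiteAbove, bipartiteBelow] at this
    rw [this]
    exact sum_congr rfl fun x _ => congrArg card (filter_congr fun w _ => G.adj_comm w x)
  calc ∑ _x ∈ K, c * #W = ∑ _w ∈ W, c * #K := by simp only [sum_const, nsmul_eq_mul]; ring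
    _ ≤ ∑ w ∈ W, (#{x ∈ K | G.Adj w x} : ℝ) := sum_le_sum hdeg
    _ = ∑ x ∈ K, (#{w ∈ W | G.Adj x w} : ℝ) := by exact_mod_cast hcount

variable [DecidableEq V]

lemma exists_card_undominated_le {c : ℝ} (hc : c ≤ 1) {K : Finset V}
    (hdeg : ∀ v ∈ K, c * #K ≤ #{w ∈ K | G.Adj v w}) (m : ℕ) :
    ∃ D ⊆ K, #D ≤ m ∧ (#{v ∈ K | ∀ u ∈ D, ¬G.Adj u v} : ℝ) ≤ (1 - c) ^ m * #K := by
  induction m with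
  | zero => exact ⟨∅, empty_subset _, le_rfl, by simp⟩
  | succ m ih =>
    obtain ⟨D, hDK, hDm, hW⟩ := ih
    set W := {v ∈ K | ∀ u ∈ D, ¬G.Adj u v}
    obtain hWe | hW0 := W.eq_empty_or_nonempty
    · refine ⟨D, hDK, hDm.trans m.le_succ, ?_⟩
      change (#W : ℝ) ≤ _
      rw [hWe, card_empty, Nat.cast_zero]
      exact mul_nonneg (pow_nonneg (by linarith) _) (Nat.cast_nonneg _)
    obtain ⟨x, hxK, hx⟩ :=
      exists_le_card_filter_adj (filter_subset _ K) hW0 fun w hw => hdeg w (filter_subset _ K hw)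
    refine ⟨insert x D, insert_subset hxK hDK, (card_insert_le _ _).trans (by omega), ?_⟩
    have hW' : {v ∈ K | ∀ u ∈ insert x D, ¬G.Adj u v} = {w ∈ W | ¬G.Adj x w} := by
      ext v
      simp only [W, mem_filter, forall_mem_insert]
      tauto
    have hsplit := card_filter_add_card_filter_not (s := W) (G.Adj x)
    rw [hW']
    calc (#{w ∈ W | ¬G.Adj x w} : ℝ) = #W - #{w ∈ W | G.Adj x w} := by
          rw [← hsplit]; push_cast; ring
      _ ≤ (1 - c) * #W := by linarith
      _ ≤ (1 - c) * ((1 - c) ^ m * #K) := mul_le_mul_of_nonneg_left hW (by linarith)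
      _ = (1 - c) ^ (m + 1) * #K := by ring

lemma exists_dominating_card_le {c : ℝ} (hc : c ≤ 1) {K : Finset V}
    (hdeg : ∀ v ∈ K, c * #K ≤ #{w ∈ K | G.Adj v w}) {m : ℕ} (hm : (1 - c) ^ m * #K < 1) :
    ∃ D ⊆ K, #D ≤ m ∧ ∀ v ∈ K, ∃ u ∈ D, G.Adj v u := by
  obtain ⟨D, hDK, hDm, hW⟩ := exists_card_undominated_le hc hdeg m
  refine ⟨D, hDK, hDm, fun v hv => ?_⟩
  have hW0 : {v ∈ K | ∀ u ∈ D, ¬G.Adj u v} = ∅ := by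
    rw [← card_eq_zero, ← Nat.lt_one_iff]
    exact_mod_cast hW.trans_lt hm
  by_contra! h
  exact (filter_eq_empty_iff.mp hW0) hv fun u hu huv => h u hu huv.symm

lemma exists_dominating_card_le_ceil_log [Fintype V] {c : ℝ} (hc0 : 0 < c) (hc1 : c ≤ 1) {n : ℕ}
    (hn : 0 < n) (hV : Fintype.card V ≤ n) (K : Finset V)
    (hK : ∀ v ∈ K, c * n ≤ #{w ∈ K | G.Adj v w}) :
    ∃ D ⊆ K, #D ≤ ⌈Real.log (2 * n) / c⌉₊ ∧ ∀ v ∈ K, ∃ u ∈ D, G.Adj v u := by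
  have hKn : (#K : ℝ) ≤ n := by exact_mod_cast (card_le_univ K).trans hV
  have hn0 : (0 : ℝ) < n := by exact_mod_cast hn
  refine exists_dominating_card_le hc1 (fun v hv => le_trans (by gcongr) (hK v hv)) ?_
  refine (mul_le_mul_of_nonneg_left hKn (pow_nonneg (by linarith) _)).trans_lt
    (one_sub_pow_mul_lt_one hc1 hn0 ?_)
  calc Real.log n < Real.log (2 * n) := Real.log_lt_log hn0 (by linarith)
    _ = c * (Real.log (2 * n) / c) := by field_simp
    _ ≤ c * ⌈Real.log (2 * n) / c⌉₊ := by gcongr; exact Nat.le_ceil _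

end Domination

lemma exists_walk_length_le_three {K D A : Set V} (hDK : D ⊆ K)
    (hdom : ∀ v ∈ K, ∃ u ∈ D, G.Adj v u) {a d : V} (p : G.Walk a d)
    (hpK : ∀ x ∈ p.support, x ∈ K) (ha : a ∈ A) (hd : d ∈ D \ A) :
    ∃ (a' d' : V) (q : G.Walk a' d'),
      q.length ≤ 3 ∧ (∀ x ∈ q.support, x ∈ K) ∧ a' ∈ A ∧ d' ∈ D \ A := by
  induction hL : p.length using Nat.strong_induction_on generalizing a p with
  | _ L ih =>
  by_cases hL3 : p.length ≤ 3
  · exact ⟨a, d, p, hL3, hpK, ha, hd⟩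
  obtain _ | ⟨h₁, _ | ⟨h₂, r⟩⟩ := p
  · simp at hL3
  · simp at hL3
  simp only [Walk.support_cons, List.mem_cons, forall_eq_or_imp] at hpK
  -- A dominator of the third vertex either lies in `A`, so the walk shortens, or is a target.
  obtain ⟨u, huD, hu⟩ := hdom _ (hpK.2.2 _ r.start_mem_support)
  by_cases huA : u ∈ A
  · refine ih _ ?_ (.cons hu.symm r) ?_ huA rfl
    · simp only [Walk.length_cons] at hL ⊢; omega
    · simpa [hDK huD] using hpK.2.2
  · refine ⟨a, u, .cons h₁ (.cons h₂ (.cons hu .nil)), by simp, ?_, ha, huD, huA⟩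
    simpa [hDK huD] using ⟨hpK.1, hpK.2.1, hpK.2.2 _ r.start_mem_support⟩

section ConnectedDomination

variable [DecidableEq V] {K D : Finset V}

lemma exists_connected_union_of_not_subset (hK : (G.induce (K : Set V)).Connected)
    (hDK : D ⊆ K) (hdom : ∀ v ∈ K, ∃ u ∈ D, G.Adj v u) {A : Finset V} (hAK : A ⊆ K)
    (hA : (G.induce (A : Set V)).Connected) (hDA : ¬D ⊆ A) :
    ∃ P ⊆ K, (G.induce (↑(A ∪ P) : Set V)).Connected ∧ #(P \ A) ≤ 3 ∧ ∃ d ∈ P, d ∈ D \ A := by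
  obtain ⟨⟨a, haA⟩⟩ := hA.nonempty
  obtain ⟨d, hd⟩ := sdiff_nonempty.mpr hDA
  obtain ⟨w⟩ := hK.preconnected ⟨a, hAK haA⟩ ⟨d, hDK (mem_sdiff.mp hd).1⟩
  have hwK : ∀ x ∈ (w.map (Embedding.induce _).toHom).support, x ∈ (K : Set V) := by
    simp only [Walk.support_map, List.mem_map]
    rintro _ ⟨x, -, rfl⟩
    exact x.2
  obtain ⟨a', d', q, hq3, hqK, ha', hd'⟩ := exists_walk_length_le_three (A := (A : Set V))
    (coe_subset.mpr hDK) (by simpa using hdom) _ hwK haA (by simpa using hd)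
  refine ⟨q.support.toFinset, fun x hx => by simpa using hqK x (by simpa using hx), ?_, ?_,
    d', by simp, by simpa using hd'⟩
  · rw [coe_union, List.coe_toFinset]
    exact induce_union_connected hA.preconnected q.connected_induce_support.preconnected
      ⟨a', ha', q.start_mem_support⟩
  · calc #(q.support.toFinset \ A) ≤ #(q.support.toFinset.erase a') :=
          card_le_card fun x hx => by
            simp only [mem_sdiff, mem_erase] at hx ⊢
            exact ⟨fun h => hx.2 (h ▸ ha'), hx.1⟩
      _ ≤ q.length := by
          rw [card_erase_of_mem (by simp)]
          have := q.support.toFinset_card_le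
          rw [Walk.length_support] at this
          omega
      _ ≤ 3 := hq3

theorem exists_connected_superset_card_le_three_mul (hK : (G.induce (K : Set V)).Connected)
    (hDK : D ⊆ K) (hdom : ∀ v ∈ K, ∃ u ∈ D, G.Adj v u) :
    ∃ T, D ⊆ T ∧ T ⊆ K ∧ #T ≤ 3 * #D ∧ (G.induce (T : Set V)).Connected := by
  suffices H : ∀ j (A : Finset V), #(D \ A) = j → A ⊆ K → (G.induce (A : Set V)).Connected →
      #A + 3 * #(D \ A) ≤ 3 * #D →
      ∃ T, D ⊆ T ∧ T ⊆ K ∧ #T ≤ 3 * #D ∧ (G.induce (T : Set V)).Connected by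
    obtain ⟨⟨v, hv⟩⟩ := hK.nonempty
    obtain ⟨d, hd, -⟩ := hdom v hv
    refine H _ {d} rfl (by simpa using hDK hd) (by rw [coe_singleton]; simp) ?_
    rw [sdiff_singleton_eq_erase, card_erase_of_mem hd, card_singleton]
    have := card_pos.mpr ⟨d, hd⟩
    omega
  intro j
  induction j using Nat.strong_induction_on with
  | _ j ih =>
  intro A hj hAK hA hcard
  by_cases hDA : D ⊆ A
  · refine ⟨A, hDA, hAK, ?_, hA⟩
    rw [sdiff_eq_empty_iff_subset.mpr hDA, card_empty] at hcard
    omega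
  obtain ⟨P, hPK, hconn, hP3, d, hdP, hd⟩ :=
    exists_connected_union_of_not_subset hK hDK hdom hAK hA hDA
  have hshrink : #(D \ (A ∪ P)) < #(D \ A) :=
    card_lt_card ⟨sdiff_subset_sdiff subset_rfl subset_union_left,
      fun h => (mem_sdiff.mp (h hd)).2 (mem_union_right _ hdP)⟩
  have hgrow : #(A ∪ P) ≤ #A + 3 := by
    rw [← union_sdiff_self_eq_union, card_union_of_disjoint disjoint_sdiff]
    omega
  exact ih _ (hj ▸ hshrink) _ rfl (union_subset hAK hPK) hconn (by omega)

end ConnectedDomination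

lemma exists_connected_closed_subset {R : Finset V} (hR : R.Nonempty) :
    ∃ K ⊆ R, (G.induce (K : Set V)).Connected ∧ ∀ u ∈ K, ∀ w ∈ R, G.Adj u w → w ∈ K := by
  classical
  obtain ⟨v, hv⟩ := hR
  obtain ⟨K, hK, hmax⟩ := exists_max_image
    (R.powerset.filter fun K : Finset V => (G.induce (K : Set V)).Connected) card
    ⟨{v}, mem_filter.mpr ⟨by simpa using hv, by rw [coe_singleton]; simp⟩⟩
  rw [mem_filter, mem_powerset] at hK
  refine ⟨K, hK.1, hK.2, fun u hu w hw huw => ?_⟩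
  by_contra hwK
  have hconn : (G.induce (↑(insert w K) : Set V)).Connected := by
    rw [coe_insert, ← Set.union_singleton]
    exact connected_induce_union hK.2.preconnected (by simp) hu rfl huw
  have := hmax _ (mem_filter.mpr ⟨mem_powerset.mpr (insert_subset hw hK.1), hconn⟩)
  rw [card_insert_of_notMem hwK] at this
  omega

lemma IsDomKtModel.cons {k : ℕ} {T₀ : Set V} {T : Fin k → Set V} (hT : G.IsDomKtModel k T)
    (h₀ : (G.induce T₀).Connected) (hdisj : ∀ i, Disjoint T₀ (T i))
    (hdom : ∀ i, ∀ v ∈ T i, ∃ u ∈ T₀, G.Adj v u) :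
    G.IsDomKtModel (k + 1) (Fin.cons T₀ T) := by
  obtain ⟨hne, hpair, hconn, hadj⟩ := hT
  obtain ⟨⟨v, hv⟩⟩ := h₀.nonempty
  refine ⟨?_, ?_, ?_, ?_⟩
  · simpa [Fin.forall_fin_succ] using ⟨⟨v, hv⟩, hne⟩
  · intro i j hij
    cases i using Fin.cases <;> cases j using Fin.cases
    · exact absurd rfl hij
    · simpa using hdisj _
    · simpa using (hdisj _).symm
    · simpa using hpair (fun h => hij (congrArg _ h))
  · simpa [Fin.forall_fin_succ] using ⟨h₀, hconn⟩
  · intro i j hij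
    cases j using Fin.cases with
    | zero => exact absurd hij (Fin.not_lt_zero _)
    | succ j =>
      cases i using Fin.cases with
      | zero => simpa using hdom j
      | succ i => simpa using hadj i j (Fin.succ_lt_succ_iff.mp hij)

section Peeling

variable [DecidableEq V] [DecidableRel G.Adj] {δ s : ℕ}

lemma exists_connected_dominating_split
    (hdom : ∀ K : Finset V, (∀ v ∈ K, δ ≤ #{w ∈ K | G.Adj v w}) →
      ∃ D ⊆ K, #D ≤ s ∧ ∀ v ∈ K, ∃ u ∈ D, G.Adj v u)
    {k : ℕ} {R : Finset V} (hR : R.Nonempty)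
    (hdeg : ∀ v ∈ R, δ + 3 * s * (k + 1) ≤ #{w ∈ R | G.Adj v w}) :
    ∃ T₀ R' : Finset V, T₀ ⊆ R ∧ R' ⊆ R ∧ Disjoint T₀ R' ∧ R'.Nonempty ∧
      (G.induce (T₀ : Set V)).Connected ∧ (∀ v ∈ R', ∃ u ∈ T₀, G.Adj v u) ∧
      ∀ v ∈ R', δ + 3 * s * k ≤ #{w ∈ R' | G.Adj v w} := by
  obtain ⟨K, hKR, hK, hclosed⟩ := exists_connected_closed_subset hR
  have hdegK : ∀ v ∈ K, δ + 3 * s * (k + 1) ≤ #{w ∈ K | G.Adj v w} := by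
    intro v hv
    convert hdeg v (hKR hv) using 2
    ext w
    simp only [mem_filter]
    exact ⟨fun h => ⟨hKR h.1, h.2⟩, fun h => ⟨hclosed v hv w h.1 h.2, h.2⟩⟩
  rw [mul_add_one] at hdegK
  obtain ⟨D, hDK, hDs, hD⟩ := hdom K fun v hv => (Nat.le_add_right _ _).trans (hdegK v hv)
  obtain ⟨T₀, hDT, hTK, hTcard, hTconn⟩ := exists_connected_superset_card_le_three_mul hK hDK hD
  obtain ⟨⟨v, hv⟩⟩ := hK.nonempty
  have hTK_lt : #T₀ < #K := by
    have : #{w ∈ K | G.Adj v w} < #K := card_lt_card (filter_ssubset.mpr ⟨v, hv, G.irrefl⟩)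
    have := hdegK v hv
    omega
  refine ⟨T₀, K \ T₀, hTK.trans hKR, sdiff_subset.trans hKR, disjoint_sdiff,
    sdiff_nonempty_of_card_lt_card hTK_lt, hTconn, fun v hv => ?_, fun v hv => ?_⟩
  · obtain ⟨u, hu, hvu⟩ := hD v (mem_sdiff.mp hv).1
    exact ⟨u, hDT hu, hvu⟩
  · have hsplit : #{w ∈ K | G.Adj v w} ≤ #{w ∈ K \ T₀ | G.Adj v w} + #T₀ := by
      refine (card_le_card fun w hw => ?_).trans (card_union_le _ _)
      by_cases hwT : w ∈ T₀ <;> simp_all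
    have := hdegK v (mem_sdiff.mp hv).1
    omega

theorem exists_isDomKtModel_subset
    (hdom : ∀ K : Finset V, (∀ v ∈ K, δ ≤ #{w ∈ K | G.Adj v w}) →
      ∃ D ⊆ K, #D ≤ s ∧ ∀ v ∈ K, ∃ u ∈ D, G.Adj v u)
    (k : ℕ) (R : Finset V) (hR : R.Nonempty)
    (hdeg : ∀ v ∈ R, δ + 3 * s * k ≤ #{w ∈ R | G.Adj v w}) :
    ∃ T : Fin k → Set V, (∀ i, T i ⊆ R) ∧ G.IsDomKtModel k T := by
  induction k generalizing R with
  | zero => exact ⟨finZeroElim, finZeroElim, finZeroElim, finZeroElim, finZeroElim, finZeroElim⟩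
  | succ k ih =>
    obtain ⟨T₀, R', hT₀R, hR'R, hdisj, hR', hconn, hdomR', hdegR'⟩ :=
      exists_connected_dominating_split hdom hR hdeg
    obtain ⟨T, hTR', hT⟩ := ih R' hR' hdegR'
    refine ⟨Fin.cons (T₀ : Set V) T, ?_,
      hT.cons hconn (fun i => (disjoint_coe.mpr hdisj).mono_right (hTR' i))
        fun i v hv => hdomR' v (hTR' i hv)⟩
    simpa [Fin.forall_fin_succ] using ⟨hT₀R, fun i => (hTR' i).trans (coe_subset.mpr hR'R)⟩

end Peeling

end SimpleGraph

theorem hasDomKtModel_of_linear_minDegree_general (c : ℝ) (hc0 : 0 < c) (hc1 : c < 1)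
    (n : ℕ) (hn : 0 < n)
    {V : Type*} [Fintype V] [Nonempty V] (G : SimpleGraph V) [DecidableRel G.Adj]
    (hV : Fintype.card V ≤ n) (t : ℕ)
    (hδ : ∀ v, c * n + 6 * c⁻¹ * t * Real.log (2 * n) ≤ (G.degree v : ℝ)) :
    G.HasDomKtModel t := by
  classical
  set m := ⌈Real.log (2 * n) / c⌉₊
  have hm : (m : ℝ) ≤ 2 * (Real.log (2 * n) / c) := by
    refine Nat.ceil_le_two_mul ?_
    have : Real.log 2 ≤ Real.log (2 * n) :=
      Real.log_le_log two_pos (le_mul_of_one_le_right zero_le_two (by exact_mod_cast hn))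
    rw [le_div_iff₀ hc0]
    linarith [Real.log_two_gt_d9]
  obtain ⟨T, -, hT⟩ := SimpleGraph.exists_isDomKtModel_subset
    (fun K hK => SimpleGraph.exists_dominating_card_le_ceil_log hc0 hc1.le hn hV K
      fun v hv => Nat.ceil_le.mp (hK v hv))
    t univ univ_nonempty fun v _ => by
      rw [← Nat.ceil_add_natCast (by positivity), Nat.ceil_le,
        ← SimpleGraph.neighborFinset_eq_filter, SimpleGraph.card_neighborFinset_eq_degree]
      have h3mt : 3 * (m : ℝ) * t ≤ 6 * c⁻¹ * t * Real.log (2 * n) :=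
        calc 3 * (m : ℝ) * t ≤ 3 * (2 * (Real.log (2 * n) / c)) * t := by gcongr
          _ = 6 * c⁻¹ * t * Real.log (2 * n) := by ring
      push_cast
      exact (add_le_add_right h3mt _).trans (hδ v)
  exact ⟨T, hT⟩

/-- Fix c ∈ (0, 1) and a positive integer n with cn > ln(2n).  Then every graph with at most
n vertices and minimum degree at least cn + 6c⁻¹·t·ln(2n) contains a dominating K_t-model. -/
theorem hasDomKtModel_of_linear_minDegree (c : ℝ) (hc0 : 0 < c) (hc1 : c < 1)
    (n : ℕ) (hn : 0 < n) (hcn : Real.log (2 * n) < c * n)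
    {V : Type*} [Fintype V] [Nonempty V] (G : SimpleGraph V) [DecidableRel G.Adj]
    (hV : Fintype.card V ≤ n) (t : ℕ)
    (hδ : ∀ v, c * n + 6 * c⁻¹ * t * Real.log (2 * n) ≤ (G.degree v : ℝ)) :
    G.HasDomKtModel t :=
  hasDomKtModel_of_linear_minDegree_general c hc0 hc1 n hn G hV t hδ
end
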